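/- Let k, l ∈ ℕ, let (G,φ) be a J_{16}(k,l)-free ordered graph on n vertices, and let L be a 3-list-assignment of G. Then there exists a family 𝓛 of 3-list-assignments of G such that: (i) |𝓛| ≤ n^{3(k+l)}; (ii) for every L' ∈ 𝓛 and every vertex v, L'(v) ⊆ L(v); (iii) for every L' ∈ 𝓛, in the subgraph of G induced by X' = {v ∈ V(G) : |L'(v)| ≥ 2}, every vertex has at most 2 forward neighbors (with respect to φ); and (iv) if c is an L-coloring of G with |c^{-1}(i)| ≥ k+l for every i ∈ {1,2,3}, then c is an L'-coloring for some L' ∈ 𝓛. -/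

import Mathlib

/-- An ordered graph `(G, φ)` is `J₁₆(k, l)`-free: there are no `k + l + 3` distinct
vertices `a 0 < ⋯ < a (k-1) < u 0 < u 1 < u 2 < b 0 < ⋯ < b (l-1)` (with respect to
`φ`) such that `u 0 u 1` and `u 0 u 2` are edges of `G` and no other pair among these
vertices is adjacent. -/
def J16klFree {V : Type*} (G : SimpleGraph V) (φ : V → ℝ) (k l : ℕ) : Prop :=
  ¬ ∃ (a : Fin k → V) (u : Fin 3 → V) (b : Fin l → V),
      (∀ i j : Fin k, i < j → φ (a i) < φ (a j)) ∧
      (∀ i j : Fin 3, i < j → φ (u i) < φ (u j)) ∧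
      (∀ i j : Fin l, i < j → φ (b i) < φ (b j)) ∧
      (∀ (i : Fin k) (j : Fin 3), φ (a i) < φ (u j)) ∧
      (∀ (i : Fin 3) (j : Fin l), φ (u i) < φ (b j)) ∧
      G.Adj (u 0) (u 1) ∧ G.Adj (u 0) (u 2) ∧ ¬ G.Adj (u 1) (u 2) ∧
      (∀ i j : Fin k, ¬ G.Adj (a i) (a j)) ∧
      (∀ i j : Fin l, ¬ G.Adj (b i) (b j)) ∧
      (∀ (i : Fin k) (j : Fin 3), ¬ G.Adj (a i) (u j)) ∧
      (∀ (i : Fin k) (j : Fin l), ¬ G.Adj (a i) (b j)) ∧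
      (∀ (i : Fin 3) (j : Fin l), ¬ G.Adj (u i) (b j))

open Function Sum

/-!
Guess, for every colour `x`, the `k` first and the `l` last vertices of the colour class of `x`:
there are at most `n ^ (3(k+l))` guesses. For a guess `t`, let `L' v` be the set of colours that
`v` receives in the proper `L`-colourings whose colour classes have exactly these ends. A vertex
with `|L' v| ≥ 2` is not guessed, so in each such colouring it lies strictly between the guessed
ends of its class. Hence if `p < q < r` with `p ∼ q`, `p ∼ r`, `|L' p|, |L' r| ≥ 2` and a common
colour in `L' p ∩ L' q ∩ L' r`, then `q ∼ r`, since otherwise the ends of that colour class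
together with `p, q, r` form a `J₁₆(k, l)`.

Now let `|L' v| ≥ 2` and let `u₁, u₂, u₃` be forward neighbours of `v` with `|L' uᵢ| ≥ 2`. In each
such colouring, two of the `uᵢ` avoid the colour of `v` and share a colour; they are non-adjacent,
so that colour is not in `L' v`. Taking a colouring in which `u₁` has a colour of `L' v` shows
`u₂ ≁ u₃`. So the `uᵢ` are pairwise non-adjacent, and the sets `L' v ∩ L' uᵢ` are pairwise
disjoint subsets of `L' v` of size at least `|L' v| - 1`, which is impossible.
-/

theorem SimpleGraph.IsIndepSet.not_adj {V : Type*} {G : SimpleGraph V} {s : Set V}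
    (hs : G.IsIndepSet s) {x y : V} (hx : x ∈ s) (hy : y ∈ s) : ¬ G.Adj x y := by
  obtain rfl | hxy := eq_or_ne x y
  · exact G.irrefl
  · exact hs hx hy hxy

theorem J16klFree.adj {V : Type*} {G : SimpleGraph V} {φ : V → ℝ} {k l : ℕ}
    (hfree : J16klFree G φ k l) {f : Fin k ⊕ Fin l → V} {p q r : V}
    (hlow : StrictMono (φ ∘ f ∘ inl)) (hhigh : StrictMono (φ ∘ f ∘ inr))
    (hfp : ∀ i, φ (f (inl i)) < φ p) (hpq : φ p < φ q) (hqr : φ q < φ r)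
    (hrf : ∀ j, φ r < φ (f (inr j))) (hGpq : G.Adj p q) (hGpr : G.Adj p r)
    (hind : ∀ z ∈ ({p, q, r} : Set V), G.IsIndepSet (insert z (Set.range f))) :
    G.Adj q r := by
  by_contra hGqr
  have hpr : φ p < φ r := hpq.trans hqr
  have hf : ∀ j j', ¬ G.Adj (f j) (f j') := fun j j' =>
    (hind p (by simp)).not_adj (.inr ⟨j, rfl⟩) (.inr ⟨j', rfl⟩)
  have hfu : ∀ j, ∀ z ∈ ({p, q, r} : Set V), ¬ G.Adj (f j) z := fun j z hz =>
    (hind z hz).not_adj (.inr ⟨j, rfl⟩) (.inl rfl)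
  refine hfree ⟨f ∘ inl, ![p, q, r], f ∘ inr, fun i j h => hlow h, ?_, fun i j h => hhigh h,
    ?_, ?_, hGpq, hGpr, hGqr, fun i j => hf _ _, fun i j => hf _ _, ?_, fun i j => hf _ _, ?_⟩
  · intro i j h
    fin_cases i <;> fin_cases j <;> simp_all
  · intro i j
    fin_cases j
    exacts [hfp i, (hfp i).trans hpq, (hfp i).trans hpr]
  · intro i j
    fin_cases i
    exacts [hpr.trans (hrf j), hqr.trans (hrf j), hrf j]
  · intro i j
    fin_cases j <;> exact hfu _ _ (by simp)
  · intro i j h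
    fin_cases i <;> exact hfu _ _ (by simp) h.symm

section Ends

variable {V : Type*} [LinearOrder V] {k l : ℕ}

/-- `f ∘ inl` lists `k` smallest and `f ∘ inr` lists `l` largest elements of `s`. -/
def Set.IsEnds (s : Set V) (f : Fin k ⊕ Fin l → V) : Prop :=
  (∀ j, f j ∈ s) ∧ StrictMono (f ∘ inl) ∧ StrictMono (f ∘ inr) ∧
    ∀ w ∈ s, w ∉ Set.range f → (∀ i, f (inl i) < w) ∧ ∀ j, w < f (inr j)

theorem Set.Finite.exists_isEnds {s : Set V} (hs : s.Finite) (h : k + l ≤ s.ncard) :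
    ∃ f : Fin k ⊕ Fin l → V, s.IsEnds f := by
  obtain ⟨n, hn⟩ : ∃ n, hs.toFinset.card = n := ⟨_, rfl⟩
  rw [Set.ncard_eq_toFinset_card s hs, hn] at h
  let e := hs.toFinset.orderEmbOfFin hn
  let g : Fin k ⊕ Fin l → Fin n :=
    Sum.elim (fun i => ⟨i, by omega⟩) (fun j => ⟨n - l + j, by omega⟩)
  refine ⟨e ∘ g, fun j => hs.mem_toFinset.1 (hs.toFinset.orderEmbOfFin_mem hn (g j)),
    fun i j hij => e.strictMono (Fin.mk_lt_mk.2 hij),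
    fun i j hij => e.strictMono (Fin.mk_lt_mk.2 (by simp only [Fin.lt_def] at hij; omega)), ?_⟩
  intro w hw hwf
  obtain ⟨m, rfl⟩ : w ∈ Set.range e := by
    rwa [Finset.range_orderEmbOfFin, hs.coe_toFinset]
  have hkm : k ≤ m := by
    by_contra! hm
    exact hwf ⟨inl ⟨m, hm⟩, rfl⟩
  have hml : m < n - l := by
    by_contra! hm
    exact hwf ⟨inr ⟨m - (n - l), by omega⟩, congrArg e (Fin.ext (by simp [g]; omega))⟩
  refine ⟨fun i => e.strictMono ?_, fun j => e.strictMono ?_⟩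
  · show i.val < m.val
    omega
  · show m.val < n - l + j.val
    omega

end Ends

section Achievable

variable {V α : Type*} [Finite α]

noncomputable def achievableColors (C : Set (V → α)) (v : V) : Finset α :=
  (Set.toFinite ((· v) '' C)).toFinset

variable {C : Set (V → α)}

theorem mem_achievableColors {v : V} {x : α} :
    x ∈ achievableColors C v ↔ ∃ c ∈ C, c v = x := by
  simp [achievableColors]

theorem apply_mem_achievableColors {c : V → α} (hc : c ∈ C) (v : V) :
    c v ∈ achievableColors C v :=
  mem_achievableColors.2 ⟨c, hc, rfl⟩

theorem card_achievableColors_le_one {v : V} {x : α} (h : ∀ c ∈ C, c v = x) :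
    (achievableColors C v).card ≤ 1 :=
  Finset.card_le_one.2 fun _ hy _ hz => by
    obtain ⟨c, hc, rfl⟩ := mem_achievableColors.1 hy
    obtain ⟨c', hc', rfl⟩ := mem_achievableColors.1 hz
    rw [h c hc, h c' hc']

end Achievable

section Framed

variable {V α : Type*} [LinearOrder V] {k l : ℕ}

def framedColorings (G : SimpleGraph V) (L : V → Finset α) (t : α → Fin k ⊕ Fin l → V) :
    Set (V → α) :=
  {c | (∀ u v, G.Adj u v → c u ≠ c v) ∧ (∀ v, c v ∈ L v) ∧ ∀ x, {w | c w = x}.IsEnds (t x)}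

variable {G : SimpleGraph V} {L : V → Finset α} {t : α → Fin k ⊕ Fin l → V} {c : V → α}

theorem apply_ends_of_mem_framedColorings (hc : c ∈ framedColorings G L t) (x : α)
    (j : Fin k ⊕ Fin l) : c (t x j) = x :=
  (hc.2.2 x).1 j

theorem isIndepSet_insert_range_of_mem_framedColorings (hc : c ∈ framedColorings G L t)
    (w : V) : G.IsIndepSet (insert w (Set.range (t (c w)))) := by
  have hcol : ∀ y ∈ insert w (Set.range (t (c w))), c y = c w := by
    rintro _ (rfl | ⟨j, rfl⟩)
    exacts [rfl, apply_ends_of_mem_framedColorings hc _ j]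
  exact fun y hy z hz _ hadj => hc.1 y z hadj ((hcol y hy).trans (hcol z hz).symm)

variable [Finite α]

theorem achievableColors_framedColorings_subset (v : V) :
    achievableColors (framedColorings G L t) v ⊆ L v := fun _ hx => by
  obtain ⟨c, hc, rfl⟩ := mem_achievableColors.1 hx
  exact hc.2.1 v

theorem not_mem_range_of_two_le_card_achievableColors {w : V}
    (hw : 2 ≤ (achievableColors (framedColorings G L t) w).card) (x : α) :
    w ∉ Set.range (t x) := by
  rintro ⟨j, rfl⟩
  have := card_achievableColors_le_one (C := framedColorings G L t) fun c hc =>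
    apply_ends_of_mem_framedColorings hc x j
  omega

theorem ends_lt_of_two_le_card_achievableColors (hc : c ∈ framedColorings G L t) {w : V}
    (hw : 2 ≤ (achievableColors (framedColorings G L t) w).card) :
    (∀ i, t (c w) (inl i) < w) ∧ ∀ j, w < t (c w) (inr j) :=
  (hc.2.2 (c w)).2.2.2 w rfl (not_mem_range_of_two_le_card_achievableColors hw _)

theorem J16klFree.adj_of_mem_achievableColors {φ : V → ℝ} (hφ : StrictMono φ)
    (hfree : J16klFree G φ k l) {p q r : V} {x : α} (hpq : p < q) (hqr : q < r)
    (hGpq : G.Adj p q) (hGpr : G.Adj p r)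
    (hp : 2 ≤ (achievableColors (framedColorings G L t) p).card)
    (hr : 2 ≤ (achievableColors (framedColorings G L t) r).card)
    (hxp : x ∈ achievableColors (framedColorings G L t) p)
    (hxq : x ∈ achievableColors (framedColorings G L t) q)
    (hxr : x ∈ achievableColors (framedColorings G L t) r) : G.Adj q r := by
  obtain ⟨cp, hcp, rfl⟩ := mem_achievableColors.1 hxp
  obtain ⟨cq, hcq, hcqq⟩ := mem_achievableColors.1 hxq
  obtain ⟨cr, hcr, hcrr⟩ := mem_achievableColors.1 hxr
  have hends := hcp.2.2 (cp p)
  refine hfree.adj (f := t (cp p)) (hφ.comp hends.2.1) (hφ.comp hends.2.2.1)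
    (fun i => hφ ((ends_lt_of_two_le_card_achievableColors hcp hp).1 i)) (hφ hpq) (hφ hqr)
    (fun j => hφ (hcrr ▸ (ends_lt_of_two_le_card_achievableColors hcr hr).2 j)) hGpq hGpr ?_
  rintro z (rfl | rfl | rfl)
  · exact isIndepSet_insert_range_of_mem_framedColorings hcp z
  · exact hcqq ▸ isIndepSet_insert_range_of_mem_framedColorings hcq z
  · exact hcrr ▸ isIndepSet_insert_range_of_mem_framedColorings hcr z

end Framed

section ThreeColors

variable {V : Type*} {G : SimpleGraph V} {C : Set (V → Fin 3)}

theorem card_sub_one_le_card_inter {s t : Finset (Fin 3)} (ht : 2 ≤ t.card) :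
    s.card - 1 ≤ (s ∩ t).card := by
  have := Finset.card_union_add_card_inter s t
  have := (s ∪ t).card_le_univ
  simp only [Fintype.card_fin] at this
  omega

theorem not_disjoint_inter_of_two_le_card {s t₁ t₂ t₃ : Finset (Fin 3)} (hs : 2 ≤ s.card)
    (h₁ : 2 ≤ t₁.card) (h₂ : 2 ≤ t₂.card) (h₃ : 2 ≤ t₃.card) :
    ¬ Disjoint (s ∩ t₁) t₂ ∨ ¬ Disjoint (s ∩ t₁) t₃ ∨ ¬ Disjoint (s ∩ t₂) t₃ := by
  by_contra! ⟨h₁₂, h₁₃, h₂₃⟩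
  have hcard : (s ∩ t₁ ∪ s ∩ t₂ ∪ s ∩ t₃).card =
      (s ∩ t₁).card + (s ∩ t₂).card + (s ∩ t₃).card := by
    rw [Finset.card_union_of_disjoint, Finset.card_union_of_disjoint]
    · exact h₁₂.mono_right Finset.inter_subset_right
    · exact Finset.disjoint_union_left.2
        ⟨h₁₃.mono_right Finset.inter_subset_right, h₂₃.mono_right Finset.inter_subset_right⟩
  have hsub : s ∩ t₁ ∪ s ∩ t₂ ∪ s ∩ t₃ ⊆ s := by
    simp only [Finset.union_subset_iff, Finset.inter_subset_left, and_self]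
  have := Finset.card_le_card hsub
  have := card_sub_one_le_card_inter (s := s) h₁
  have := card_sub_one_le_card_inter (s := s) h₂
  have := card_sub_one_le_card_inter (s := s) h₃
  omega

theorem not_adj_of_disjoint_achievableColors (hC : ∀ c ∈ C, ∀ u w, G.Adj u w → c u ≠ c w)
    {v : V} {N : Set V} (hv : 2 ≤ (achievableColors C v).card)
    (hN : ∀ u ∈ N, G.Adj v u ∧ 2 ≤ (achievableColors C u).card)
    (hdisj : ∀ q ∈ N, ∀ r ∈ N, q ≠ r → ¬ G.Adj q r →
      Disjoint (achievableColors C v ∩ achievableColors C q) (achievableColors C r))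
    {u w w' : V} (hu : u ∈ N) (hw : w ∈ N) (hw' : w' ∈ N) (huw : u ≠ w) (huw' : u ≠ w') :
    ¬ G.Adj w w' := by
  obtain ⟨x, hx⟩ : (achievableColors C v ∩ achievableColors C u).Nonempty := by
    rw [← Finset.card_pos]
    have := card_sub_one_le_card_inter (s := achievableColors C v) (hN u hu).2
    omega
  obtain ⟨c, hc, rfl⟩ := mem_achievableColors.1 (Finset.mem_inter.1 hx).2
  have hne_v : ∀ z ∈ N, c z ≠ c v := fun z hz => (hC c hc v z (hN z hz).1).symm
  have hne_u : ∀ z ∈ N, u ≠ z → c u ≠ c z := fun z hz huz hcuz =>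
    Finset.disjoint_left.1 (hdisj u hu z hz huz fun hadj => hC c hc u z hadj hcuz) hx
      (hcuz ▸ apply_mem_achievableColors hc z)
  have hww' : c w = c w' := by
    have := hne_v u hu; have := hne_v w hw; have := hne_v w' hw'
    have := hne_u w hw huw; have := hne_u w' hw' huw'
    omega
  exact fun hadj => hC c hc w w' hadj hww'

theorem ncard_le_two_of_disjoint_achievableColors
    (hC : ∀ c ∈ C, ∀ u w, G.Adj u w → c u ≠ c w)
    {v : V} {N : Set V} (hv : 2 ≤ (achievableColors C v).card)
    (hN : ∀ u ∈ N, G.Adj v u ∧ 2 ≤ (achievableColors C u).card)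
    (hdisj : ∀ q ∈ N, ∀ r ∈ N, q ≠ r → ¬ G.Adj q r →
      Disjoint (achievableColors C v ∩ achievableColors C q) (achievableColors C r)) :
    N.ncard ≤ 2 := by
  by_contra! h
  obtain ⟨u₁, u₂, u₃, h₁, h₂, h₃, h₁₂, h₁₃, h₂₃⟩ :=
    (Set.two_lt_ncard_iff (Set.finite_of_ncard_pos (by omega))).1 h
  have not_adj : ∀ {u w w'}, u ∈ N → w ∈ N → w' ∈ N → u ≠ w → u ≠ w' → ¬ G.Adj w w' :=
    not_adj_of_disjoint_achievableColors hC hv hN hdisj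
  rcases not_disjoint_inter_of_two_le_card hv (hN _ h₁).2 (hN _ h₂).2 (hN _ h₃).2 with h | h | h
  · exact h (hdisj _ h₁ _ h₂ h₁₂ (not_adj h₃ h₁ h₂ h₁₃.symm h₂₃.symm))
  · exact h (hdisj _ h₁ _ h₃ h₁₃ (not_adj h₂ h₁ h₃ h₁₂.symm h₂₃))
  · exact h (hdisj _ h₂ _ h₃ h₂₃ (not_adj h₁ h₂ h₃ h₁₂ h₁₃))

end ThreeColors

theorem J16klFree.ncard_forward_le_two {V : Type*} [LinearOrder V] {G : SimpleGraph V}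
    {φ : V → ℝ} {k l : ℕ} (hφ : StrictMono φ) (hfree : J16klFree G φ k l)
    {L : V → Finset (Fin 3)} {t : Fin 3 → Fin k ⊕ Fin l → V} {v : V}
    (hv : 2 ≤ (achievableColors (framedColorings G L t) v).card) :
    {u | G.Adj v u ∧ v < u ∧ 2 ≤ (achievableColors (framedColorings G L t) u).card}.ncard ≤ 2 := by
  refine ncard_le_two_of_disjoint_achievableColors (fun c hc => hc.1) hv
    (fun u hu => ⟨hu.1, hu.2.2⟩) ?_
  rintro q ⟨hGvq, hvq, hq⟩ r ⟨hGvr, hvr, hr⟩ hqr hGqr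
  refine Finset.disjoint_left.2 fun x hx hxr => hGqr ?_
  obtain ⟨hxv, hxq⟩ := Finset.mem_inter.1 hx
  rcases hqr.lt_or_gt with h | h
  · exact hfree.adj_of_mem_achievableColors hφ hvq h hGvq hGvr hv hr hxv hxq hxr
  · exact (hfree.adj_of_mem_achievableColors hφ hvr h hGvr hGvq hv hq hxv hxr hxq).symm

theorem exists_profile_few_forward_neighbors
    {V : Type*} [Fintype V] (k l : ℕ) (G : SimpleGraph V) (φ : V → ℝ)
    (hφ : Function.Injective φ) (hfree : J16klFree G φ k l)
    (L : V → Finset (Fin 3)) :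
    ∃ 𝓛 : Finset (V → Finset (Fin 3)),
      𝓛.card ≤ (Fintype.card V) ^ (3 * (k + l)) ∧
      (∀ L' ∈ 𝓛, ∀ v : V, L' v ⊆ L v) ∧
      (∀ L' ∈ 𝓛, ∀ v : V, 2 ≤ (L' v).card →
        ({u : V | G.Adj v u ∧ φ v < φ u ∧ 2 ≤ (L' u).card} : Set V).ncard ≤ 2) ∧
      (∀ c : V → Fin 3, (∀ u v, G.Adj u v → c u ≠ c v) → (∀ v, c v ∈ L v) →
        (∀ i : Fin 3, k + l ≤ ({v : V | c v = i} : Set V).ncard) →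
        ∃ L' ∈ 𝓛, ∀ v, c v ∈ L' v) := by
  classical
  let : LinearOrder V := LinearOrder.lift' φ hφ
  let profile (t : Fin 3 → Fin k ⊕ Fin l → V) : V → Finset (Fin 3) :=
    achievableColors (framedColorings G L t)
  refine ⟨Finset.univ.image profile, ?_, ?_, ?_, ?_⟩
  · calc (Finset.univ.image profile).card ≤ Fintype.card (Fin 3 → Fin k ⊕ Fin l → V) :=
          Finset.card_image_le
      _ = Fintype.card V ^ (3 * (k + l)) := by simp [← pow_mul, mul_comm]
  · simp only [Finset.mem_image, Finset.mem_univ, true_and, forall_exists_index]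
    rintro _ t rfl v
    exact achievableColors_framedColorings_subset v
  · simp only [Finset.mem_image, Finset.mem_univ, true_and, forall_exists_index]
    rintro _ t rfl v hv
    exact hfree.ncard_forward_le_two (φ := φ) (L := L) (t := t) (fun _ _ h => h) hv
  · intro c hc hcL hcard
    choose t ht using fun x => (Set.toFinite _).exists_isEnds (hcard x)
    exact ⟨profile t, Finset.mem_image_of_mem _ (Finset.mem_univ t),
      apply_mem_achievableColors ⟨hc, hcL, ht⟩⟩
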